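/- Let ε ∈ [0, π/2] and let A ⊆ [0, 2π] be a Lebesgue-measurable set with measure at most 2π − 4ε. Then for every θ ∈ ℝ, ∫_A |cos(α − θ)| dα ≤ 4·cos ε. -/

import Mathlib

open MeasureTheory Set Real
open scoped ENNReal

/-!
Write `s = sin ε` and split `|cos| ≤ (|cos| - s)⁺ + s`. The constant part contributes at most
`s · |A| ≤ s (2π - 4ε)`, while `(|cos| - s)⁺` is nonnegative, so its integral over `A` is at most
its integral over a full period, which is `4 cos ε - s (2π - 4ε)`; the two `s`-terms cancel.
-/

theorem setIntegral_le_integral_max_sub_add {X : Type*} [MeasurableSpace X] {μ : Measure X}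
    {g : X → ℝ} {s t : Set X} (hst : s ⊆ t) (hg : IntegrableOn g t μ) (ht : μ t ≠ ∞) (c : ℝ) :
    ∫ x in s, g x ∂μ ≤ (∫ x in t, max (g x - c) 0 ∂μ) + c * μ.real s := by
  have hs : μ s ≠ ∞ := measure_ne_top_of_subset hst ht
  have hmax : IntegrableOn (fun x ↦ max (g x - c) 0) t μ :=
    (hg.sub (integrableOn_const ht)).pos_part
  calc ∫ x in s, g x ∂μ ≤ ∫ x in s, (max (g x - c) 0 + c) ∂μ :=
        setIntegral_mono (hg.mono_set hst) ((hmax.mono_set hst).add (integrableOn_const hs))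
          fun x ↦ by simp only [← sub_le_iff_le_add, le_max_left]
    _ = ∫ x in s, max (g x - c) 0 ∂μ + c * μ.real s := by
        rw [integral_add (hmax.mono_set hst) (integrableOn_const hs), setIntegral_const,
          smul_eq_mul, mul_comm]
    _ ≤ ∫ x in t, max (g x - c) 0 ∂μ + c * μ.real s := by
        gcongr
        exact ae_of_all _ fun x ↦ le_max_right _ _

theorem Real.cos_le_cos_of_abs_le {x y : ℝ} (hxy : |x| ≤ |y|) (hy : |y| ≤ π) : cos y ≤ cos x := by
  simpa only [cos_abs] using cos_le_cos_of_nonneg_of_le_pi (abs_nonneg x) hy hxy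

/-- On `[-π/2, π/2]` the integrand is `cos x - sin ε` where `|x| ≤ π/2 - ε` and `0` elsewhere. -/
theorem integral_max_abs_cos_sub_sin (ε : ℝ) (hε₀ : 0 ≤ ε) (hε₁ : ε ≤ π / 2) :
    ∫ x in -(π / 2)..π / 2, max (|cos x| - sin ε) 0 = 2 * cos ε - (π - 2 * ε) * sin ε := by
  set a := π / 2 - ε with ha
  have hcos_a : cos a = sin ε := cos_pi_div_two_sub ε
  have habs_a : |a| = a := abs_of_nonneg (by linarith)
  have habs_cos : ∀ x, |x| ≤ π / 2 → |cos x| = cos x :=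
    fun x hx ↦ abs_of_nonneg (cos_nonneg_of_mem_Icc (abs_le.1 hx))
  have hint : ∀ u v, IntervalIntegrable (fun x ↦ max (|cos x| - sin ε) 0) volume u v :=
    fun u v ↦ (by fun_prop : Continuous fun x ↦ max (|cos x| - sin ε) 0).intervalIntegrable u v
  have hzero : ∀ x, a ≤ |x| → |x| ≤ π / 2 → max (|cos x| - sin ε) 0 = 0 := fun x h₁ h₂ ↦ by
    have := cos_le_cos_of_abs_le (x := a) (y := x) (by rwa [habs_a]) (by linarith [pi_pos])
    rw [habs_cos x h₂]
    exact max_eq_right (by linarith)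
  have hleft : ∫ x in -(π / 2)..-a, max (|cos x| - sin ε) 0 = 0 := by
    refine intervalIntegral.integral_zero_ae (ae_of_all _ fun x hx ↦ ?_)
    rw [uIoc_of_le (by linarith)] at hx
    exact hzero x (by rw [abs_of_nonpos (by linarith [hx.2])]; linarith [hx.2])
      (abs_le.2 ⟨hx.1.le, by linarith [hx.2]⟩)
  have hright : ∫ x in a..π / 2, max (|cos x| - sin ε) 0 = 0 := by
    refine intervalIntegral.integral_zero_ae (ae_of_all _ fun x hx ↦ ?_)
    rw [uIoc_of_le (by linarith)] at hx
    exact hzero x (by rw [abs_of_pos (by linarith [hx.1])]; linarith [hx.1])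
      (abs_le.2 ⟨by linarith [hx.1], hx.2⟩)
  have hmiddle : ∫ x in -a..a, max (|cos x| - sin ε) 0 = ∫ x in -a..a, (cos x - sin ε) := by
    refine intervalIntegral.integral_congr fun x hx ↦ ?_
    rw [uIcc_of_le (by linarith)] at hx
    have hx' : |x| ≤ a := abs_le.2 hx
    have := cos_le_cos_of_abs_le (x := x) (y := a) (by rwa [habs_a]) (by linarith [pi_pos])
    rw [habs_cos x (by linarith)]
    exact max_eq_left (by linarith)
  rw [← intervalIntegral.integral_add_adjacent_intervals (hint _ _) (hint _ _), hleft, zero_add,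
    ← intervalIntegral.integral_add_adjacent_intervals (hint _ a) (hint _ _), hright, add_zero,
    hmiddle, intervalIntegral.integral_sub (continuous_cos.intervalIntegrable _ _)
      intervalIntegrable_const, integral_cos, intervalIntegral.integral_const, sin_neg,
    sin_pi_div_two_sub, smul_eq_mul]
  ring

/-- `|cos|` has period `π`, so a window of length `2π` covers two copies of `[-π/2, π/2]`. -/
theorem intervalIntegral_max_abs_cos_comp_sub_eq_two_mul (θ c : ℝ) :
    ∫ x in (0 : ℝ)..2 * π, max (|cos (x - θ)| - c) 0
      = 2 * ∫ x in -(π / 2)..π / 2, max (|cos x| - c) 0 := by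
  set f : ℝ → ℝ := fun x ↦ max (|cos x| - c) 0
  have hper : Function.Periodic f π := fun x ↦ by simp only [f, cos_add_pi, abs_neg]
  have hint : ∀ u v, IntervalIntegrable f volume u v :=
    fun u v ↦ (by fun_prop : Continuous f).intervalIntegrable u v
  have h := hper.intervalIntegral_add_zsmul_eq 2 (-θ) hint
  rw [hper.intervalIntegral_add_eq (-θ) (-(π / 2)), show -(π / 2) + π = π / 2 by ring] at h
  rw [intervalIntegral.integral_comp_sub_right f θ, zero_sub,
    show 2 * π - θ = -θ + (2 : ℤ) • π by simp; ring, h]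
  simp

theorem integral_abs_cos_le_general
    (ε : ℝ) (hε : ε ∈ Icc 0 (Real.pi / 2))
    (A : Set ℝ) (hA : A ⊆ Icc 0 (2 * Real.pi))
    (hμ : volume A ≤ ENNReal.ofReal (2 * Real.pi - 4 * ε)) (θ : ℝ) :
    (∫ α in A, |Real.cos (α - θ)|) ≤ 4 * Real.cos ε := by
  obtain ⟨hε₀, hε₁⟩ := hε
  have hsin : 0 ≤ sin ε := sin_nonneg_of_nonneg_of_le_pi hε₀ (by linarith [pi_pos])
  have hvol : volume.real A ≤ 2 * π - 4 * ε :=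
    ENNReal.toReal_le_of_le_ofReal (by linarith [pi_pos]) hμ
  have hint : IntegrableOn (fun α ↦ |cos (α - θ)|) (Icc 0 (2 * π)) :=
    (by fun_prop : Continuous fun α ↦ |cos (α - θ)|).integrableOn_Icc
  calc ∫ α in A, |cos (α - θ)|
      ≤ (∫ α in Icc 0 (2 * π), max (|cos (α - θ)| - sin ε) 0) + sin ε * volume.real A :=
        setIntegral_le_integral_max_sub_add hA hint measure_Icc_lt_top.ne _
    _ = 2 * (2 * cos ε - (π - 2 * ε) * sin ε) + sin ε * volume.real A := by
        rw [integral_Icc_eq_integral_Ioc, ← intervalIntegral.integral_of_le two_pi_pos.le,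
          intervalIntegral_max_abs_cos_comp_sub_eq_two_mul, integral_max_abs_cos_sub_sin ε hε₀ hε₁]
    _ ≤ 2 * (2 * cos ε - (π - 2 * ε) * sin ε) + sin ε * (2 * π - 4 * ε) := by gcongr
    _ = 4 * cos ε := by ring

/-- For `ε ∈ [0, π/2]` and a measurable set `A ⊆ [0, 2π]` of measure at most
`2π − 4ε`, the integral of `|cos(α − θ)|` over `A` is at most `4·cos ε`. -/
theorem integral_abs_cos_le
    (ε : ℝ) (hε : ε ∈ Icc 0 (Real.pi / 2))
    (A : Set ℝ) (hA : A ⊆ Icc 0 (2 * Real.pi)) (hAm : MeasurableSet A)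
    (hμ : volume A ≤ ENNReal.ofReal (2 * Real.pi - 4 * ε)) (θ : ℝ) :
    (∫ α in A, |Real.cos (α - θ)|) ≤ 4 * Real.cos ε :=
  integral_abs_cos_le_general ε hε A hA hμ θ
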